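/- Suppose q̃ : [0,∞) → ℝ is continuously differentiable and satisfies |q̃(t)| ≤ C₁(1+t)^{−2} for some constant C₁, and solves ∂_t q̃(t) = −Z ∫₀^t M(t−s) q̃(s) ds + h(t), where h : [0,∞) → ℝ is continuous with |h(t)| ≤ c₂ (1+t)^{−3/2} for some constant c₂. Then for all t ≥ 0: q̃(t) = K(t) q̃(0) + ∫₀^t K(t−s) h(s) ds. -/

import Mathlib

open MeasureTheory Filter Real

noncomputable section

/-- ℝ³ -/
abbrev R3 := EuclideanSpace ℝ (Fin 3)

/-- The Fourier transform `Ŵ(ξ) = (2π)^{-3/2} ∫ e^{iξ·x} W(x) dx`. -/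
noncomputable def hatW (W : R3 → ℝ) (ξ : R3) : ℂ :=
  (((2 * π) ^ (-(3:ℝ)/2) : ℝ) : ℂ) *
    ∫ x : R3, Complex.exp (Complex.I * ((inner ℝ ξ x : ℝ) : ℂ)) * (W x : ℂ)

/-- `M(t) = ∫ |Ŵ(ξ)|² cos(|ξ|²t/2) dξ = Re⟨W, e^{iΔt/2} W⟩`. -/
noncomputable def Mfun (W : R3 → ℝ) (t : ℝ) : ℝ :=
  ∫ ξ : R3, ‖hatW W ξ‖^2 * Real.cos (‖ξ‖^2 * t / 2)

/-!
Write `k ⋆ f` for the Volterra convolution `t ↦ ∫₀ᵗ k(t - s) f(s) ds` and `1` for the constant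
kernel, so that `1 ⋆ f` is the primitive of `f` from `0`. With `k = Z M`, the two equations
integrate to `K = 1 - 1 ⋆ (k ⋆ K)` and `q = q(0) - 1 ⋆ (k ⋆ q) + 1 ⋆ h`. Convolving the first
with `h` and using associativity of `⋆` (Fubini on the triangle `0 ≤ s ≤ τ ≤ t`) gives
`K ⋆ h = 1 ⋆ h - 1 ⋆ (k ⋆ (K ⋆ h))`, so `r = q(0) K + K ⋆ h` satisfies the integrated equation
of `q`. The difference `u = q - r` then solves `u = -1 ⋆ (k ⋆ u)`, whence
`|u(x)| ≤ C ∫₀ˣ |u|` on each bounded interval, and Grönwall's inequality gives `u = 0`.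
The kernel `M` is continuous because `Ŵ` is a rescaled Fourier transform of a Schwartz
function, so that `|Ŵ|²` is integrable.
-/

open FourierTransform Set

lemma hatW_eq_fourier (W : SchwartzMap R3 ℝ) :
    hatW W = fun ξ => (((2 * π) ^ (-(3:ℝ)/2) : ℝ) : ℂ) *
      𝓕 (W.postcompCLM Complex.ofRealCLM) ((-(2 * π)⁻¹) • ξ) := by
  ext ξ
  rw [hatW, SchwartzMap.fourier_coe, Real.fourier_eq']
  congr 2 with x
  rw [SchwartzMap.postcompCLM_apply, Complex.ofRealCLM_apply, smul_eq_mul,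
    real_inner_smul_right, real_inner_comm, mul_comm Complex.I]
  congr 3
  field_simp

lemma continuous_hatW (W : SchwartzMap R3 ℝ) : Continuous (hatW W) := by
  rw [hatW_eq_fourier]
  fun_prop

lemma integrable_norm_hatW_sq (W : SchwartzMap R3 ℝ) :
    Integrable fun ξ => ‖hatW W ξ‖ ^ 2 := by
  rw [hatW_eq_fourier]
  simp_rw [norm_mul, mul_pow]
  refine Integrable.const_mul ?_ _
  exact ((SchwartzMap.memLp (𝓕 (W.postcompCLM Complex.ofRealCLM)) 2).integrable_norm_pow
    two_ne_zero).comp_smul (R := -(2 * π)⁻¹) (by simp [pi_pos.ne'])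

lemma continuous_Mfun (W : SchwartzMap R3 ℝ) : Continuous (Mfun W) := by
  refine continuous_of_dominated (bound := fun ξ => ‖hatW W ξ‖ ^ 2)
    (fun t => by have := continuous_hatW W; fun_prop) (fun t => ?_)
    (integrable_norm_hatW_sq W) (ae_of_all _ fun ξ => by fun_prop)
  refine ae_of_all _ fun ξ => ?_
  simpa [norm_mul] using mul_le_of_le_one_right (by positivity) (abs_cos_le_one _)

theorem integral_integral_triangle_swap {F : ℝ → ℝ → ℝ} (hF : Continuous F.uncurry) {t : ℝ}
    (ht : 0 ≤ t) :
    ∫ τ in (0:ℝ)..t, ∫ s in (0:ℝ)..τ, F τ s = ∫ s in (0:ℝ)..t, ∫ τ in s..t, F τ s := by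
  set T : Set (ℝ × ℝ) := {p | p.2 ≤ p.1}
  have hupper : ∀ τ ∈ uIcc 0 t,
      ∫ s in (0:ℝ)..τ, F τ s = ∫ s in (0:ℝ)..t, T.indicator F.uncurry (τ, s) := by
    intro τ hτ
    rw [uIcc_of_le ht] at hτ
    exact (intervalIntegral.integral_indicator hτ).symm
  have hlower : ∀ s ∈ uIcc 0 t,
      ∫ τ in s..t, F τ s = ∫ τ in (0:ℝ)..t, T.indicator F.uncurry (τ, s) := by
    intro s hs
    rw [uIcc_of_le ht] at hs
    have hslice : ∀ τ, T.indicator F.uncurry (τ, s) = (Ici s).indicator (F · s) τ := fun τ => by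
      simp only [T, indicator_apply, mem_ofPred_eq, mem_Ici, Function.uncurry_apply_pair]
    simp only [hslice]
    have hint : IntervalIntegrable ((Ici s).indicator (F · s)) volume 0 t := by
      have hFs : IntervalIntegrable (F · s) volume 0 t :=
        (hF.comp (continuous_id.prodMk continuous_const : Continuous fun τ : ℝ => (τ, s))
          ).intervalIntegrable 0 t
      exact ⟨hFs.1.indicator measurableSet_Ici, hFs.2.indicator measurableSet_Ici⟩
    rw [← intervalIntegral.integral_add_adjacent_intervals (b := s)
      (hint.mono_set (by simp [uIcc_of_le, hs.1, ht, Icc_subset_Icc le_rfl hs.2]))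
      (hint.mono_set (by simp [uIcc_of_le, hs.2, ht, Icc_subset_Icc hs.1 le_rfl]))]
    have hzero : ∫ τ in (0:ℝ)..s, (Ici s).indicator (F · s) τ = 0 := by
      refine intervalIntegral.integral_zero_ae ?_
      filter_upwards [compl_mem_ae_iff.2 (measure_singleton s)] with τ hτs hτ
      rw [uIoc_of_le hs.1] at hτ
      exact indicator_of_notMem (fun h : s ≤ τ => hτs (le_antisymm hτ.2 h)) (F · s)
    rw [hzero, zero_add]
    refine intervalIntegral.integral_congr fun τ hτ => ?_
    rw [uIcc_of_le hs.2] at hτ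
    exact (indicator_of_mem (show τ ∈ Ici s from hτ.1) (F · s)).symm
  have hT : IntegrableOn (T.indicator F.uncurry) (uIoc 0 t ×ˢ uIoc 0 t) :=
    ((hF.continuousOn.integrableOn_compact (isCompact_Icc.prod isCompact_Icc)).indicator
      (measurableSet_le measurable_snd measurable_fst)).mono_set
      (prod_mono uIoc_subset_uIcc uIoc_subset_uIcc)
  rw [intervalIntegral.integral_congr hupper, intervalIntegral.integral_congr hlower]
  exact intervalIntegral_intervalIntegral_swap hT

theorem eq_zero_of_abs_le_mul_integral_abs {u : ℝ → ℝ} (hu : Continuous u) {C T : ℝ}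
    (hbound : ∀ x ∈ Icc 0 T, |u x| ≤ C * ∫ s in (0:ℝ)..x, |u s|) :
    ∀ x ∈ Icc 0 T, u x = 0 := by
  have hφ : ∀ x, HasDerivAt (fun x => ∫ s in (0:ℝ)..x, |u s|) |u x| x := fun x =>
    (hu.abs.integral_hasStrictDerivAt 0 x).hasDerivAt
  have hφ0 := eq_zero_of_abs_deriv_le_mul_abs_self_of_eq_zero_right
    (fun x _ => (hφ x).continuousAt.continuousWithinAt) (fun x _ => (hφ x).hasDerivWithinAt)
    intervalIntegral.integral_same fun x hx => by
      rw [Real.norm_eq_abs, abs_abs, Real.norm_eq_abs,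
        abs_of_nonneg (intervalIntegral.integral_nonneg hx.1 fun _ _ => abs_nonneg _)]
      exact hbound x (Ico_subset_Icc_self hx)
  intro x hx
  simpa [hφ0 x hx] using hbound x hx

def volterraConv (k f : ℝ → ℝ) (t : ℝ) : ℝ := ∫ s in (0:ℝ)..t, k (t - s) * f s

section VolterraConv

variable {k f g : ℝ → ℝ}

@[fun_prop]
theorem continuous_volterraConv (hk : Continuous k) (hf : Continuous f) :
    Continuous fun t => volterraConv k f t :=
  intervalIntegral.continuous_parametric_intervalIntegral_of_continuous (by fun_prop)
    continuous_id

theorem volterraConv_one_left (t : ℝ) :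
    volterraConv 1 f t = ∫ s in (0:ℝ)..t, f s := by
  simp [volterraConv]

theorem volterraConv_congr {k' f' : ℝ → ℝ} {t : ℝ} (ht : 0 ≤ t) (hk : EqOn k k' (Icc 0 t))
    (hf : EqOn f f' (Icc 0 t)) : volterraConv k f t = volterraConv k' f' t := by
  refine intervalIntegral.integral_congr fun s hs => ?_
  rw [uIcc_of_le ht] at hs
  simp only [hk ⟨sub_nonneg.2 hs.2, sub_le_self t hs.1⟩, hf hs]

theorem volterraConv_add_right (hk : Continuous k) (hf : Continuous f) (hg : Continuous g)
    (t : ℝ) : volterraConv k (f + g) t = volterraConv k f t + volterraConv k g t := by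
  simp only [volterraConv, Pi.add_apply, mul_add]
  exact intervalIntegral.integral_add (by apply Continuous.intervalIntegrable; fun_prop)
    (by apply Continuous.intervalIntegrable; fun_prop)

theorem volterraConv_sub_right (hk : Continuous k) (hf : Continuous f) (hg : Continuous g)
    (t : ℝ) : volterraConv k (f - g) t = volterraConv k f t - volterraConv k g t := by
  simp only [volterraConv, Pi.sub_apply, mul_sub]
  exact intervalIntegral.integral_sub (by apply Continuous.intervalIntegrable; fun_prop)
    (by apply Continuous.intervalIntegrable; fun_prop)

theorem volterraConv_smul_right (c : ℝ) : volterraConv k (c • f) = c • volterraConv k f := by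
  ext t
  simp only [volterraConv, Pi.smul_apply, smul_eq_mul, mul_left_comm _ c,
    intervalIntegral.integral_const_mul]

theorem volterraConv_neg_right : volterraConv k (-f) = -volterraConv k f := by
  ext t
  simp only [volterraConv, Pi.neg_apply, mul_neg, intervalIntegral.integral_neg]

theorem volterraConv_sub_left (hf : Continuous f) (hg : Continuous g) {h : ℝ → ℝ}
    (hh : Continuous h) (t : ℝ) :
    volterraConv (f - g) h t = volterraConv f h t - volterraConv g h t := by
  simp only [volterraConv, Pi.sub_apply, sub_mul]
  exact intervalIntegral.integral_sub (by apply Continuous.intervalIntegrable; fun_prop)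
    (by apply Continuous.intervalIntegrable; fun_prop)

theorem volterraConv_assoc (hk : Continuous k) (hf : Continuous f)
    (hg : Continuous g) {t : ℝ} (ht : 0 ≤ t) :
    volterraConv (volterraConv k f) g t = volterraConv k (volterraConv f g) t := by
  have hshift : ∀ s, volterraConv k f (t - s) = ∫ ρ in s..t, k (t - ρ) * f (ρ - s) := fun s => by
    rw [volterraConv]
    simpa only [sub_self, sub_sub_sub_cancel_right] using
      (intervalIntegral.integral_comp_sub_right (a := s) (b := t)
        (fun x => k (t - s - x) * f x) s).symm
  calc volterraConv (volterraConv k f) g t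
      = ∫ s in (0:ℝ)..t, ∫ ρ in s..t, k (t - ρ) * f (ρ - s) * g s := by
        rw [volterraConv]
        simp only [hshift, intervalIntegral.integral_mul_const]
    _ = ∫ ρ in (0:ℝ)..t, ∫ s in (0:ℝ)..ρ, k (t - ρ) * f (ρ - s) * g s :=
        (integral_integral_triangle_swap (by fun_prop) ht).symm
    _ = volterraConv k (volterraConv f g) t := by
        simp only [volterraConv, mul_assoc, intervalIntegral.integral_const_mul]

theorem abs_volterraConv_le (hk : Continuous k) (hf : Continuous f) {B τ : ℝ}
    (hτ : 0 ≤ τ) (hB : ∀ x ∈ Icc 0 τ, |k x| ≤ B) :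
    |volterraConv k f τ| ≤ B * ∫ s in (0:ℝ)..τ, |f s| := by
  rw [← intervalIntegral.integral_const_mul]
  refine intervalIntegral.abs_integral_le_integral_abs hτ |>.trans <|
    intervalIntegral.integral_mono_on hτ (by apply Continuous.intervalIntegrable; fun_prop)
      (by apply Continuous.intervalIntegrable; fun_prop) fun s hs => ?_
  rw [abs_mul]
  exact mul_le_mul_of_nonneg_right (hB _ ⟨sub_nonneg.2 hs.2, sub_le_self τ hs.1⟩) (abs_nonneg _)

theorem eq_zero_of_eq_neg_volterraConv_one {u : ℝ → ℝ} (hk : Continuous k)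
    (hu : Continuous u) (heq : ∀ t, 0 ≤ t → u t = -volterraConv 1 (volterraConv k u) t)
    {t : ℝ} (ht : 0 ≤ t) : u t = 0 := by
  obtain ⟨B, hB⟩ := isCompact_Icc.exists_bound_of_continuousOn (hk.continuousOn (s := Icc 0 t))
  have hB0 : 0 ≤ B := (norm_nonneg _).trans (hB 0 ⟨le_rfl, ht⟩)
  refine eq_zero_of_abs_le_mul_integral_abs hu (C := B * t) (fun x hx => ?_) t ⟨ht, le_rfl⟩
  have hconv : ∀ τ ∈ uIoc 0 x, ‖volterraConv k u τ‖ ≤ B * ∫ s in (0:ℝ)..x, |u s| := by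
    intro τ hτ
    rw [uIoc_of_le hx.1] at hτ
    refine (abs_volterraConv_le hk hu hτ.1.le fun y hy => hB y ⟨hy.1, hy.2.trans
      (hτ.2.trans hx.2)⟩).trans (mul_le_mul_of_nonneg_left ?_ hB0)
    exact intervalIntegral.integral_mono_interval le_rfl hτ.1.le hτ.2
      (ae_of_all _ fun _ => abs_nonneg _) (by apply Continuous.intervalIntegrable; fun_prop)
  calc |u x| = ‖∫ τ in (0:ℝ)..x, volterraConv k u τ‖ := by
        rw [heq x hx.1, abs_neg, volterraConv_one_left, Real.norm_eq_abs]
    _ ≤ B * (∫ s in (0:ℝ)..x, |u s|) * |x - 0| :=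
        intervalIntegral.norm_integral_le_of_norm_le_const hconv
    _ ≤ B * t * ∫ s in (0:ℝ)..x, |u s| := by
        rw [sub_zero, abs_of_nonneg hx.1, mul_right_comm]
        have : 0 ≤ ∫ s in (0:ℝ)..x, |u s| :=
          intervalIntegral.integral_nonneg hx.1 fun s _ => abs_nonneg (u s)
        gcongr
        exact hx.2

theorem eq_add_volterraConv_one_of_hasDerivAt {f' : ℝ → ℝ} (hf : Continuous f)
    (hf' : Continuous f') (hderiv : ∀ t > 0, HasDerivAt f (f' t) t) {t : ℝ} (ht : 0 ≤ t) :
    f t = f 0 + volterraConv 1 f' t := by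
  rw [volterraConv_one_left, intervalIntegral.integral_eq_sub_of_hasDerivAt_of_le ht
    hf.continuousOn (fun x hx => hderiv x hx.1) (hf'.intervalIntegrable 0 t)]
  ring

theorem volterra_duhamel_of_continuous {K q h : ℝ → ℝ} (hk : Continuous k)
    (hKc : Continuous K) (hqc : Continuous q) (hh : Continuous h) (hK0 : K 0 = 1)
    (hK : ∀ t > 0, HasDerivAt K (-volterraConv k K t) t)
    (hq : ∀ t > 0, HasDerivAt q (-volterraConv k q t + h t) t) {t : ℝ} (ht : 0 ≤ t) :
    q t = K t * q 0 + volterraConv K h t := by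
  have hKint : ∀ t, 0 ≤ t → K t = 1 - volterraConv 1 (volterraConv k K) t := fun t ht => by
    rw [eq_add_volterraConv_one_of_hasDerivAt hKc (continuous_volterraConv hk hKc).neg hK ht,
      volterraConv_neg_right, hK0, Pi.neg_apply, sub_eq_add_neg]
  have hqint : ∀ t, 0 ≤ t →
      q t = q 0 - volterraConv 1 (volterraConv k q) t + volterraConv 1 h t := fun t ht => by
    rw [eq_add_volterraConv_one_of_hasDerivAt (f' := -volterraConv k q + h) hqc (by fun_prop)
      hq ht, volterraConv_add_right continuous_one (by fun_prop) hh, volterraConv_neg_right,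
      Pi.neg_apply]
    ring
  have hKhc : Continuous (volterraConv K h) := continuous_volterraConv hKc hh
  have hKh : ∀ t, 0 ≤ t → volterraConv K h t =
      volterraConv 1 h t - volterraConv 1 (volterraConv k (volterraConv K h)) t := fun t ht =>
    calc volterraConv K h t = volterraConv (1 - volterraConv 1 (volterraConv k K)) h t :=
          volterraConv_congr ht (fun s hs => hKint s hs.1) fun _ _ => rfl
      _ = volterraConv 1 h t - volterraConv (volterraConv 1 (volterraConv k K)) h t :=
          volterraConv_sub_left continuous_one (by fun_prop) hh t
      _ = volterraConv 1 h t - volterraConv 1 (volterraConv (volterraConv k K) h) t := by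
          rw [volterraConv_assoc continuous_one (by fun_prop) hh ht]
      _ = volterraConv 1 h t - volterraConv 1 (volterraConv k (volterraConv K h)) t := by
          rw [volterraConv_congr ht (fun _ _ => rfl) fun τ hτ => volterraConv_assoc hk hKc hh hτ.1]
  set r : ℝ → ℝ := q 0 • K + volterraConv K h with hr
  have hrc : Continuous r := by fun_prop
  have hrint : ∀ t, 0 ≤ t →
      r t = q 0 - volterraConv 1 (volterraConv k r) t + volterraConv 1 h t := fun t ht => by
    have hkr : volterraConv k r = q 0 • volterraConv k K + volterraConv k (volterraConv K h) :=
      funext fun τ => by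
        rw [hr, volterraConv_add_right hk (by fun_prop) hKhc, volterraConv_smul_right]; rfl
    rw [hkr, volterraConv_add_right continuous_one (by fun_prop) (by fun_prop),
      volterraConv_smul_right]
    simp only [hr, Pi.add_apply, Pi.smul_apply, smul_eq_mul]
    rw [hKint t ht, hKh t ht]
    ring
  have hdiff : ∀ t, 0 ≤ t → (q - r) t = -volterraConv 1 (volterraConv k (q - r)) t :=
    fun t ht => by
      rw [funext (volterraConv_sub_right hk hqc hrc), ← Pi.sub_def,
        volterraConv_sub_right continuous_one (by fun_prop) (by fun_prop), Pi.sub_apply,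
        hqint t ht, hrint t ht]
      ring
  have hqr := sub_eq_zero.1 (eq_zero_of_eq_neg_volterraConv_one hk (hqc.sub hrc) hdiff ht)
  rw [hqr, hr, Pi.add_apply, Pi.smul_apply, smul_eq_mul, mul_comm]

theorem volterra_duhamel {K q h : ℝ → ℝ} (hk : Continuous k) (hK0 : K 0 = 1)
    (hK : ∀ t, 0 ≤ t → HasDerivAt K (-volterraConv k K t) t)
    (hq : ∀ t, 0 ≤ t → HasDerivAt q (-volterraConv k q t + h t) t)
    (hh : ContinuousOn h (Ici 0)) {t : ℝ} (ht : 0 ≤ t) :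
    q t = K t * q 0 + volterraConv K h t := by
  have hext : ∀ {f : ℝ → ℝ}, ContinuousOn f (Ici 0) → Continuous fun t => f (max t 0) :=
    fun hf => hf.comp_continuous (by fun_prop) fun t => le_max_right t 0
  have hextEq : ∀ (f : ℝ → ℝ) {t : ℝ}, EqOn (fun s => f (max s 0)) f (Icc 0 t) :=
    fun f _ s hs => by simp only [max_eq_left hs.1]
  have hextDeriv : ∀ {f : ℝ → ℝ} {t f' : ℝ}, 0 < t → HasDerivAt f f' t →
      HasDerivAt (fun s => f (max s 0)) f' t := fun ht hf =>
    hf.congr_of_eventuallyEq <| by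
      filter_upwards [lt_mem_nhds ht] with s hs
      rw [max_eq_left hs.le]
  have hconv : ∀ {f : ℝ → ℝ} {t : ℝ}, 0 ≤ t →
      volterraConv k (fun s => f (max s 0)) t = volterraConv k f t :=
    fun ht => volterraConv_congr ht (fun _ _ => rfl) (hextEq _)
  have hduhamel := volterra_duhamel_of_continuous hk
    (hext fun t ht => (hK t ht).continuousAt.continuousWithinAt)
    (hext fun t ht => (hq t ht).continuousAt.continuousWithinAt) (hext hh)
    (by simpa only [max_self] using hK0)
    (fun t ht => by rw [hconv ht.le]; exact hextDeriv ht (hK t ht.le))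
    (fun t ht => by rw [hconv ht.le, max_eq_left ht.le]; exact hextDeriv ht (hq t ht.le)) ht
  rwa [max_eq_left ht, max_self, volterraConv_congr ht (hextEq K) (hextEq h)] at hduhamel

end VolterraConv

theorem stmt15_general
    (W : SchwartzMap R3 ℝ)
    (Z : ℝ)
    (K : ℝ → ℝ) (hK0 : K 0 = 1)
    (hK : ∀ t : ℝ, 0 ≤ t →
      HasDerivAt K (-(Z * ∫ s in (0:ℝ)..t, Mfun (⇑W) (t - s) * K s)) t)
    (q h : ℝ → ℝ)
    (hq : ∀ t : ℝ, 0 ≤ t →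
      HasDerivAt q (-(Z * ∫ s in (0:ℝ)..t, Mfun (⇑W) (t - s) * q s) + h t) t)
    (hhc : ContinuousOn h (Set.Ici 0)) :
    ∀ t : ℝ, 0 ≤ t → q t = K t * q 0 + ∫ s in (0:ℝ)..t, K (t-s) * h s := by
  have hkernel : ∀ (f : ℝ → ℝ) (t : ℝ), Z * ∫ s in (0:ℝ)..t, Mfun W (t - s) * f s =
      volterraConv (fun s => Z * Mfun W s) f t := fun f t => by
    simp only [volterraConv, mul_assoc, intervalIntegral.integral_const_mul]
  simp only [hkernel] at hK hq
  exact fun t ht => volterra_duhamel (continuous_const.mul (continuous_Mfun W)) hK0 hK hq hhc ht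

theorem stmt15
    (W : SchwartzMap R3 ℝ)
    (hWrad : ∀ x y : R3, ‖x‖ = ‖y‖ → W x = W y)
    (hWnorm : |((2*π) ^ (-(3:ℝ)/2)) * ∫ x : R3, W x| = 1)
    (Z : ℝ) (hZ : 0 < Z)
    (K : ℝ → ℝ) (hK0 : K 0 = 1)
    (hK : ∀ t : ℝ, 0 ≤ t →
      HasDerivAt K (-(Z * ∫ s in (0:ℝ)..t, Mfun (⇑W) (t - s) * K s)) t)
    (q h : ℝ → ℝ) (C₁ c₂ : ℝ)
    (hqb : ∀ t : ℝ, 0 ≤ t → |q t| ≤ C₁ * (1+t) ^ (-(2:ℝ)))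
    (hq : ∀ t : ℝ, 0 ≤ t →
      HasDerivAt q (-(Z * ∫ s in (0:ℝ)..t, Mfun (⇑W) (t - s) * q s) + h t) t)
    (hhc : ContinuousOn h (Set.Ici 0))
    (hhb : ∀ t : ℝ, 0 ≤ t → |h t| ≤ c₂ * (1+t) ^ (-(3:ℝ)/2)) :
    ∀ t : ℝ, 0 ≤ t → q t = K t * q 0 + ∫ s in (0:ℝ)..t, K (t-s) * h s :=
  stmt15_general W Z K hK0 hK q h hq hhc
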